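/- Let (X,T) be a uniquely ergodic t.d.s. with unique invariant Borel probability measure μ. Then the action on X×X of the group generated by the two homeomorphisms T×T and id×T is uniquely ergodic, and its unique invariant Borel probability measure is the product measure μ×μ. -/

import Mathlib

open MeasureTheory ProbabilityTheory

/-- **Unique ergodicity of `G^[1]` (case `d = 1` of Theorem A).** If `(X, T)` is a uniquely
ergodic t.d.s. with unique invariant Borel probability measure `μ`, then the action on
`X × X` of the group generated by `T × T` and `id × T` is uniquely ergodic, with unique
invariant Borel probability measure `μ × μ`. -/
theorem uniqueErgodicity_G1 {X : Type*} [MetricSpace X] [CompactSpace X]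
    [MeasurableSpace X] [BorelSpace X] (T : X ≃ₜ X)
    (μ : Measure X) [IsProbabilityMeasure μ] (hinv : MeasurePreserving T μ μ)
    (huniq : ∀ ν : Measure X, IsProbabilityMeasure ν → MeasurePreserving T ν ν → ν = μ) :
    (MeasurePreserving (Prod.map T T) (μ.prod μ) (μ.prod μ) ∧
      MeasurePreserving (Prod.map id T) (μ.prod μ) (μ.prod μ)) ∧
    (∀ ν : Measure (X × X), IsProbabilityMeasure ν →
      MeasurePreserving (Prod.map T T) ν ν → MeasurePreserving (Prod.map id T) ν ν →
      ν = μ.prod μ) := by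
  have hT : Measurable (T : X → X) := T.continuous.measurable
  haveI : Nonempty X := by
    by_contra h
    rw [not_nonempty_iff] at h
    simpa [Set.univ_eq_empty_iff.2 h] using (measure_univ (μ := μ))
  refine ⟨⟨hinv.prod hinv, (MeasurePreserving.id μ).prod hinv⟩, ?_⟩
  intro ν hνP hTT hidT
  -- the first marginal of ν is T-invariant, hence equal to μ
  have hfst : ν.fst = μ := by
    refine huniq _ inferInstance ⟨hT, ?_⟩
    have : Measure.map (Prod.map T T) ν = ν := hTT.map_eq
    calc Measure.map T ν.fst = Measure.map T (Measure.map Prod.fst ν) := by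
          rw [Measure.fst]
      _ = Measure.map (T ∘ Prod.fst) ν := Measure.map_map hT measurable_fst
      _ = Measure.map (Prod.fst ∘ Prod.map T T) ν := rfl
      _ = Measure.map Prod.fst (Measure.map (Prod.map T T) ν) :=
          (Measure.map_map measurable_fst (hT.prodMap hT)).symm
      _ = ν.fst := by rw [hTT.map_eq, Measure.fst]
  -- ν = ν.fst ⊗ₘ (condKernel.map T), from invariance under id × T
  have hcomp : ν = ν.fst ⊗ₘ ν.condKernel := (Measure.disintegrate ν ν.condKernel).symm
  have hκ : ν = ν.fst ⊗ₘ (Kernel.map ν.condKernel T) := by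
    conv_lhs => rw [← hidT.map_eq, hcomp]
    ext s hs
    rw [Measure.map_apply (measurable_id.prodMap hT) hs,
      Measure.compProd_apply ((measurable_id.prodMap hT) hs), Measure.compProd_apply hs]
    refine lintegral_congr fun x => ?_
    rw [Kernel.map_apply' _ hT _ (measurable_prodMk_left hs)]
    congr 1
  have huniqK := eq_condKernel_of_measure_eq_compProd (Kernel.map ν.condKernel T) hκ
  have hae : ∀ᵐ x ∂ν.fst, ν.condKernel x = μ := by
    filter_upwards [huniqK] with x hx
    refine huniq _ inferInstance ⟨hT, ?_⟩
    rw [← Kernel.map_apply _ hT, hx]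
  calc ν = ν.fst ⊗ₘ ν.condKernel := hcomp
    _ = ν.fst ⊗ₘ Kernel.const X μ := Measure.compProd_congr (by
        filter_upwards [hae] with x hx; simp [hx])
    _ = ν.fst.prod μ := Measure.compProd_const
    _ = μ.prod μ := by rw [hfst]
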